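/- Fix an index i and let C_i := (1 + R_i · Σ_{j≠i} 1/(d_{ij} - R_i))^{-1}, where R_i = (1/3)·min_{j≠i} d_{ij}. Then 0 < C_i < 1 and for every x with 0 < r_i(x) ≤ R_i one has C_i · r_i(x) ≤ w(x) < r_i(x). -/

import Mathlib

open Finset

/-!
Split `∑ⱼ 1/rⱼ(x)` into the term `1/rᵢ(x)` and the tail over `j ≠ i`. The tail is positive, which
gives `w(x) < rᵢ(x)`. Since `rᵢ(x) ≤ Rᵢ`, the triangle inequality gives `rⱼ(x) ≥ dᵢⱼ - Rᵢ > 0`, so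
the tail is at most `S = ∑_{j≠i} 1/(dᵢⱼ - Rᵢ) ≤ (Rᵢ/rᵢ(x))·S`, whence
`∑ⱼ 1/rⱼ(x) ≤ (1 + Rᵢ S)/rᵢ(x) = 1/(Cᵢ rᵢ(x))`.
-/

lemma inv_inv_add_lt_self {r t : ℝ} (hr : 0 < r) (ht : 0 < t) : (r⁻¹ + t)⁻¹ < r := by
  calc (r⁻¹ + t)⁻¹ < (r⁻¹)⁻¹ := inv_strictAnti₀ (inv_pos.2 hr) (lt_add_of_pos_right _ ht)
    _ = r := inv_inv r

lemma inv_one_add_mul_mul_le_inv_inv_add {r R t S : ℝ} (hr : 0 < r) (hrR : r ≤ R)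
    (ht : 0 ≤ t) (htS : t ≤ S) : (1 + R * S)⁻¹ * r ≤ (r⁻¹ + t)⁻¹ := by
  have hS : S ≤ r⁻¹ * R * S := le_mul_of_one_le_left (ht.trans htS) ((one_le_inv_mul₀ hr).2 hrR)
  calc (1 + R * S)⁻¹ * r = (r⁻¹ * (1 + R * S))⁻¹ := by rw [mul_inv, inv_inv, mul_comm]
    _ ≤ (r⁻¹ + t)⁻¹ := by
      refine inv_anti₀ (by positivity) ?_
      rw [mul_add, mul_one, ← mul_assoc]
      linarith

section Metric

variable {X ι : Type*} [MetricSpace X]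

lemma sub_le_dist_of_dist_le {x a b : X} {R : ℝ} (hx : dist x a ≤ R) :
    dist a b - R ≤ dist x b := by
  linarith [dist_triangle a x b, dist_comm a x]

lemma inf'_dist_pos [DecidableEq ι] {p : ι → X} (hp : Function.Injective p) {i : ι}
    {s : Finset ι} (hi : i ∉ s) (hs : s.Nonempty) :
    0 < s.inf' hs (fun j => dist (p i) (p j)) :=
  (lt_inf'_iff hs).2 fun _ hj => dist_pos.2 fun h => hi (hp h ▸ hj)

variable {s : Finset ι} {p : ι → X} {a x : X} {R : ℝ}

lemma sum_inv_dist_le_sum_inv_sub (hx : dist x a ≤ R) (hR : ∀ j ∈ s, R < dist a (p j)) :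
    ∑ j ∈ s, (dist x (p j))⁻¹ ≤ ∑ j ∈ s, (dist a (p j) - R)⁻¹ :=
  sum_le_sum fun j hj => inv_anti₀ (sub_pos.2 (hR j hj)) (sub_le_dist_of_dist_le hx)

lemma sum_inv_dist_pos (hs : s.Nonempty) (hx : dist x a ≤ R) (hR : ∀ j ∈ s, R < dist a (p j)) :
    0 < ∑ j ∈ s, (dist x (p j))⁻¹ :=
  sum_pos (fun j hj => inv_pos.2 ((sub_pos.2 (hR j hj)).trans_le (sub_le_dist_of_dist_le hx))) hs

end Metric

theorem weight_comparable_near_puncture_general {n N : ℕ}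
    (p : Fin N → EuclideanSpace ℝ (Fin n)) (hp : Function.Injective p)
    (i : Fin N) (hne : (Finset.univ.erase i).Nonempty)
    (Ri Ci : ℝ)
    (hRi : Ri = (1/3) * (Finset.univ.erase i).inf' hne (fun j => dist (p i) (p j)))
    (hCi : Ci = (1 + Ri * ∑ j ∈ Finset.univ.erase i, (dist (p i) (p j) - Ri)⁻¹)⁻¹) :
    (0 < Ci ∧ Ci < 1) ∧
    ∀ x : EuclideanSpace ℝ (Fin n), 0 < dist x (p i) → dist x (p i) ≤ Ri →
      Ci * dist x (p i) ≤ (∑ j, (dist x (p j))⁻¹)⁻¹ ∧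
      (∑ j, (dist x (p j))⁻¹)⁻¹ < dist x (p i) := by
  have hm := inf'_dist_pos hp (notMem_erase i univ) hne
  have hR : 0 < Ri := by rw [hRi]; positivity
  have hsep : ∀ j ∈ univ.erase i, Ri < dist (p i) (p j) := fun j hj => by
    have := inf'_le (fun j => dist (p i) (p j)) hj
    rw [hRi]; linarith
  have hS : 0 < ∑ j ∈ univ.erase i, (dist (p i) (p j) - Ri)⁻¹ :=
    sum_pos (fun j hj => inv_pos.2 (sub_pos.2 (hsep j hj))) hne
  subst hCi
  refine ⟨⟨by positivity, inv_lt_one_of_one_lt₀ (lt_add_of_pos_right _ (mul_pos hR hS))⟩,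
    fun x hr hrR => ?_⟩
  have htail := sum_inv_dist_pos hne hrR hsep
  rw [← add_sum_erase _ _ (mem_univ i)]
  exact ⟨inv_one_add_mul_mul_le_inv_inv_add hr hrR htail.le
    (sum_inv_dist_le_sum_inv_sub hrR hsep), inv_inv_add_lt_self hr htail⟩

/-- With `Cᵢ = (1 + Rᵢ·∑_{j≠i} 1/(dᵢⱼ - Rᵢ))⁻¹` and `Rᵢ = (1/3)·min_{j≠i} dᵢⱼ`,
one has `0 < Cᵢ < 1` and, for every `x` with `0 < rᵢ(x) ≤ Rᵢ`, `Cᵢ·rᵢ(x) ≤ w(x) < rᵢ(x)`. -/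
theorem weight_comparable_near_puncture {n N : ℕ} (hN : 2 ≤ N)
    (p : Fin N → EuclideanSpace ℝ (Fin n)) (hp : Function.Injective p)
    (i : Fin N) (hne : (Finset.univ.erase i).Nonempty)
    (Ri Ci : ℝ)
    (hRi : Ri = (1/3) * (Finset.univ.erase i).inf' hne (fun j => dist (p i) (p j)))
    (hCi : Ci = (1 + Ri * ∑ j ∈ Finset.univ.erase i, (dist (p i) (p j) - Ri)⁻¹)⁻¹) :
    (0 < Ci ∧ Ci < 1) ∧
    ∀ x : EuclideanSpace ℝ (Fin n), 0 < dist x (p i) → dist x (p i) ≤ Ri →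
      Ci * dist x (p i) ≤ (∑ j, (dist x (p j))⁻¹)⁻¹ ∧
      (∑ j, (dist x (p j))⁻¹)⁻¹ < dist x (p i) :=
  weight_comparable_near_puncture_general p hp i hne Ri Ci hRi hCi
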